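/- For every σ > 0, R > 0 and k ∈ ℝ, the Fourier transform of the truncated Gaussian satisfies ∫_{−R}^{R} (1/√(2πσ²)) · exp(−x²/(2σ²)) · exp(−i k x) dx = exp(−σ²k²/2) · Re(erf(R/(√2 σ) + i k σ/√2)), where erf is the complex error function and Re denotes the real part. -/

import Mathlib

open scoped Real
open MeasureTheory

/-- The complex error function, defined by integrating along the straight segment
from `0` to `z`: `erf(z) = (2/√π) · z · ∫₀¹ exp(−(z t)²) dt`. -/
noncomputable def cerf (z : ℂ) : ℂ :=
  (2 / (Real.sqrt π : ℂ)) * z * ∫ t in (0:ℝ)..1, Complex.exp (-(z * (t : ℂ)) ^ 2)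

lemma cerf_hasDerivAt (z₀ : ℂ) :
    HasDerivAt cerf ((2 / (Real.sqrt π : ℂ)) * Complex.exp (-z₀ ^ 2)) z₀ := by
  have hrw : cerf = fun z : ℂ =>
      (2 / (Real.sqrt π : ℂ)) * ∫ t in (0:ℝ)..1, z * Complex.exp (-(z * (t : ℂ)) ^ 2) := by
    funext z
    rw [cerf, mul_assoc, intervalIntegral.integral_const_mul]
  rw [hrw]
  have key : HasDerivAt
      (fun z : ℂ => ∫ t in (0:ℝ)..1, z * Complex.exp (-(z * (t:ℂ)) ^ 2))
      (Complex.exp (-z₀ ^ 2)) z₀ := by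
    set M : ℝ := ‖z₀‖ + 1 with hM
    have hM0 : 0 < M := by positivity
    -- continuity in t for fixed x
    have hcontF : ∀ x : ℂ, Continuous fun t : ℝ => x * Complex.exp (-(x * (t:ℂ)) ^ 2) := by
      intro x; fun_prop
    have hcontF' : Continuous fun t : ℝ =>
        Complex.exp (-(z₀ * (t:ℂ)) ^ 2) * (1 - 2 * z₀ ^ 2 * (t:ℂ) ^ 2) := by fun_prop
    have main := intervalIntegral.hasDerivAt_integral_of_dominated_loc_of_deriv_le
      (F := fun (x : ℂ) (t : ℝ) => x * Complex.exp (-(x * (t:ℂ)) ^ 2))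
      (F' := fun (x : ℂ) (t : ℝ) =>
        Complex.exp (-(x * (t:ℂ)) ^ 2) * (1 - 2 * x ^ 2 * (t:ℂ) ^ 2))
      (x₀ := z₀) (a := 0) (b := 1) (μ := volume)
      (bound := fun _ => Real.exp (M ^ 2) * (1 + 2 * M ^ 2)) (Metric.ball_mem_nhds z₀ one_pos)
      (Filter.Eventually.of_forall fun x => ((hcontF x).aestronglyMeasurable))
      ((hcontF z₀).intervalIntegrable _ _)
      hcontF'.aestronglyMeasurable
      ?_ (intervalIntegrable_const) ?_
    · have hval : (∫ t in (0:ℝ)..1,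
          Complex.exp (-(z₀ * (t:ℂ)) ^ 2) * (1 - 2 * z₀ ^ 2 * (t:ℂ) ^ 2))
          = Complex.exp (-z₀ ^ 2) := by
        have hderiv : ∀ t ∈ Set.uIcc (0:ℝ) 1,
            HasDerivAt (fun s : ℝ => (s:ℂ) * Complex.exp (-(z₀ * (s:ℂ)) ^ 2))
              (Complex.exp (-(z₀ * (t:ℂ)) ^ 2) * (1 - 2 * z₀ ^ 2 * (t:ℂ) ^ 2)) t := by
          intro t _
          have h1 := (((hasDerivAt_id ((t:ℂ))).const_mul z₀).pow 2).neg
          have h2 := h1.cexp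
          have h3 := (hasDerivAt_id ((t:ℂ))).mul h2
          have h4 := h3.comp_ofReal
          simp only [id_eq, Pi.mul_def, Pi.pow_def, Pi.neg_def] at h4
          convert h4 using 1
          ring
        rw [intervalIntegral.integral_eq_sub_of_hasDerivAt hderiv
          (hcontF'.intervalIntegrable _ _)]
        push_cast
        simp
      rw [hval] at main
      exact main.2
    · -- bound
      refine Filter.Eventually.of_forall fun t ht => fun x hx => ?_
      have htm : t ∈ Set.Ioc (0:ℝ) 1 := by
        simpa [Set.uIoc_of_le (zero_le_one)] using ht
      have ht0 : 0 ≤ t := le_of_lt htm.1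
      have ht1 : t ≤ 1 := htm.2
      have hxn : ‖x‖ ≤ M := by
        have := mem_ball_iff_norm.mp hx
        calc ‖x‖ = ‖z₀ + (x - z₀)‖ := by ring_nf
          _ ≤ ‖z₀‖ + ‖x - z₀‖ := norm_add_le _ _
          _ ≤ ‖z₀‖ + 1 := by linarith
      have hxt : ‖x * (t:ℂ)‖ ≤ M := by
        rw [norm_mul, Complex.norm_real, Real.norm_eq_abs, abs_of_nonneg ht0]
        calc ‖x‖ * t ≤ M * 1 := by
              apply mul_le_mul hxn ht1 ht0 hM0.le
          _ = M := mul_one M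
      have h1 : ‖Complex.exp (-(x * (t:ℂ)) ^ 2)‖ ≤ Real.exp (M ^ 2) := by
        rw [Complex.norm_exp]
        apply Real.exp_le_exp.mpr
        calc (-(x * (t:ℂ)) ^ 2).re ≤ ‖-(x * (t:ℂ)) ^ 2‖ := Complex.re_le_norm _
          _ = ‖x * (t:ℂ)‖ ^ 2 := by rw [norm_neg, norm_pow]
          _ ≤ M ^ 2 := by apply pow_le_pow_left₀ (norm_nonneg _) hxt
      have h2 : ‖(1 : ℂ) - 2 * x ^ 2 * (t:ℂ) ^ 2‖ ≤ 1 + 2 * M ^ 2 := by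
        calc ‖(1 : ℂ) - 2 * x ^ 2 * (t:ℂ) ^ 2‖
            ≤ ‖(1:ℂ)‖ + ‖(2:ℂ) * x ^ 2 * (t:ℂ) ^ 2‖ := norm_sub_le _ _
          _ = 1 + 2 * (‖x‖ * t) ^ 2 := by
              rw [norm_one, norm_mul, norm_mul, norm_pow, norm_pow]
              simp [Complex.norm_real, Real.norm_eq_abs, abs_of_nonneg ht0]
              ring
          _ ≤ 1 + 2 * M ^ 2 := by
              have : (‖x‖ * t) ^ 2 ≤ M ^ 2 := by
                apply pow_le_pow_left₀ (by positivity)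
                calc ‖x‖ * t ≤ M * 1 := mul_le_mul hxn ht1 ht0 hM0.le
                  _ = M := mul_one M
              linarith
      calc ‖Complex.exp (-(x * (t:ℂ)) ^ 2) * (1 - 2 * x ^ 2 * (t:ℂ) ^ 2)‖
          = ‖Complex.exp (-(x * (t:ℂ)) ^ 2)‖ * ‖(1:ℂ) - 2 * x ^ 2 * (t:ℂ) ^ 2‖ := norm_mul _ _
        _ ≤ Real.exp (M ^ 2) * (1 + 2 * M ^ 2) := by
            apply mul_le_mul h1 h2 (norm_nonneg _) (Real.exp_pos _).le
    · -- differentiability in x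
      refine Filter.Eventually.of_forall fun t _ => fun x _ => ?_
      have h1 := (((hasDerivAt_id x).mul_const ((t:ℂ))).pow 2).neg
      have h2 := h1.cexp
      have h3 := (hasDerivAt_id x).mul h2
      simp only [id_eq, Pi.mul_def, Pi.pow_def, Pi.neg_def] at h3
      refine h3.congr_deriv ?_
      ring
  exact key.const_mul _

/-- **Fourier transform of the truncated Gaussian shape function.**
For every `σ > 0`, `R > 0` and `k ∈ ℝ`,
`∫_{−R}^{R} (1/√(2πσ²)) exp(−x²/(2σ²)) exp(−ikx) dx
  = exp(−σ²k²/2) · Re(erf(R/(√2 σ) + i k σ/√2))`. -/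
theorem truncated_gaussian_fourier
    (σ R k : ℝ) (hσ : 0 < σ) (hR : 0 < R) :
    ∫ x in (-R)..R,
      ((1 / Real.sqrt (2 * π * σ ^ 2) : ℝ) : ℂ) *
        Complex.exp (-(x : ℂ) ^ 2 / (2 * (σ : ℂ) ^ 2)) *
        Complex.exp (-Complex.I * (k : ℂ) * (x : ℂ)) =
    ((Real.exp (-(σ ^ 2 * k ^ 2) / 2) *
        (cerf ((R / (Real.sqrt 2 * σ) : ℝ) + Complex.I * (k : ℂ) * (σ : ℂ) / (Real.sqrt 2 : ℂ))).re : ℝ) : ℂ) := by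
  have hσ0 : (σ:ℝ) ≠ 0 := hσ.ne'
  have hs2 : (0:ℝ) < Real.sqrt 2 := Real.sqrt_pos.mpr two_pos
  have hsπ : (0:ℝ) < Real.sqrt π := Real.sqrt_pos.mpr Real.pi_pos
  have hs2sq : ((Real.sqrt 2 : ℝ) : ℂ) ^ 2 = 2 := by
    rw [← Complex.ofReal_pow, Real.sq_sqrt two_pos.le]; norm_num
  have hs2c : ((Real.sqrt 2 : ℝ) : ℂ) ≠ 0 := by
    simpa using hs2.ne'
  have hσc : ((σ:ℝ):ℂ) ≠ 0 := by simpa using hσ0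
  set g : ℝ → ℂ := fun x =>
    ((1 / Real.sqrt (2 * π * σ ^ 2) : ℝ) : ℂ) *
      Complex.exp (-(x : ℂ) ^ 2 / (2 * (σ : ℂ) ^ 2)) *
      Complex.exp (-Complex.I * (k : ℂ) * (x : ℂ)) with hgdef
  have hgcont : Continuous g := by
    rw [hgdef]; fun_prop
  set b : ℂ := Complex.I * (k : ℂ) * (σ : ℂ) / ((Real.sqrt 2 : ℝ) : ℂ) with hbdef
  set α : ℝ := (Real.sqrt 2 * σ)⁻¹ with hαdef
  have hb2 : b ^ 2 = -(((k ^ 2 * σ ^ 2 / 2 : ℝ) : ℂ)) := by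
    rw [hbdef]; push_cast
    rw [div_pow, mul_pow, mul_pow, Complex.I_sq, hs2sq]
    ring
  have hα2 : ((α : ℝ) : ℂ) ^ 2 = 1 / (2 * (σ : ℂ) ^ 2) := by
    rw [hαdef]; push_cast
    rw [mul_inv, mul_pow, inv_pow, inv_pow, hs2sq]
    ring
  have hab : ((α : ℝ) : ℂ) * b = Complex.I * (k : ℂ) / 2 := by
    rw [hαdef, hbdef]; push_cast
    field_simp
    linear_combination (-(k:ℂ)) * hs2sq
  -- key identity between the two candidate derivatives
  have hkey : ∀ r : ℝ, g r + g (-r) =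
      ((Real.exp (-(σ ^ 2 * k ^ 2) / 2) *
        ((2 / (Real.sqrt π : ℂ)) * Complex.exp (-(((α:ℝ):ℂ) * (r:ℂ) + b) ^ 2) * ((α:ℝ):ℂ)).re : ℝ) : ℂ) := by
    intro r
    have E1 : -(((α:ℝ):ℂ) * (r:ℂ) + b) ^ 2 =
        ((k ^ 2 * σ ^ 2 / 2 - r ^ 2 / (2 * σ ^ 2) : ℝ) : ℂ) + ((-(k * r) : ℝ) : ℂ) * Complex.I := by
      have h1 : -(((α:ℝ):ℂ) * (r:ℂ) + b) ^ 2 =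
          -(((α:ℝ):ℂ) ^ 2 * (r:ℂ) ^ 2) - 2 * (((α:ℝ):ℂ) * b) * (r:ℂ) - b ^ 2 := by ring
      rw [h1, hα2, hab, hb2]
      push_cast
      field_simp
      ring
    have E2 : (Complex.exp (-(((α:ℝ):ℂ) * (r:ℂ) + b) ^ 2)).re =
        Real.exp (k ^ 2 * σ ^ 2 / 2 - r ^ 2 / (2 * σ ^ 2)) * Real.cos (k * r) := by
      rw [E1, Complex.exp_re]
      simp only [Complex.add_re, Complex.add_im, Complex.ofReal_re, Complex.ofReal_im,
        Complex.mul_I_re, Complex.mul_I_im, neg_zero, add_zero, zero_add]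
      rw [Real.cos_neg]
    have E3 : ((2 / (Real.sqrt π : ℂ)) * Complex.exp (-(((α:ℝ):ℂ) * (r:ℂ) + b) ^ 2) * ((α:ℝ):ℂ)).re
        = 2 / Real.sqrt π * α * (Complex.exp (-(((α:ℝ):ℂ) * (r:ℂ) + b) ^ 2)).re := by
      have h2 : (2 / (Real.sqrt π : ℂ)) = (((2 / Real.sqrt π : ℝ)) : ℂ) := by push_cast; ring
      rw [h2]
      simp [Complex.mul_re]
      ring
    have E4 : g r + g (-r) =
        (((1 / Real.sqrt (2 * π * σ ^ 2)) * Real.exp (-(r ^ 2) / (2 * σ ^ 2)) *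
          (2 * Real.cos (k * r)) : ℝ) : ℂ) := by
      rw [hgdef]
      simp only []
      have eg : ∀ x : ℝ, Complex.exp (-(x:ℂ) ^ 2 / (2 * (σ:ℂ) ^ 2)) =
          ((Real.exp (-(x ^ 2) / (2 * σ ^ 2)) : ℝ) : ℂ) := by
        intro x
        rw [Complex.ofReal_exp]
        congr 1
        push_cast
        ring
      rw [eg r, eg (-r)]
      rw [show (-((-r:ℝ) ^ 2) : ℝ) = -(r ^ 2) from by ring]
      have e1 : -Complex.I * (k:ℂ) * ((r:ℝ):ℂ) = -(((k * r : ℝ):ℂ)) * Complex.I := by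
        push_cast; ring
      have e2 : -Complex.I * (k:ℂ) * (((-r:ℝ)):ℂ) = (((k * r : ℝ):ℂ)) * Complex.I := by
        push_cast; ring
      rw [e1, e2]
      have hcos : Complex.exp (-(((k * r : ℝ):ℂ)) * Complex.I)
            + Complex.exp ((((k * r : ℝ):ℂ)) * Complex.I)
          = 2 * ((Real.cos (k * r) : ℝ) : ℂ) := by
        rw [Complex.ofReal_cos, Complex.two_cos]
        exact add_comm _ _
      push_cast
      push_cast at hcos
      linear_combination (((Real.sqrt (2 * π * σ ^ 2) : ℝ) : ℂ))⁻¹ *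
        Complex.exp (-(r:ℂ) ^ 2 / (2 * (σ:ℂ) ^ 2)) * hcos
    rw [E4, E3, E2]
    norm_cast
    have hsqrt : Real.sqrt (2 * π * σ ^ 2) = Real.sqrt 2 * Real.sqrt π * σ := by
      rw [show (2 * π * σ ^ 2 : ℝ) = (2 * π) * σ ^ 2 from by ring,
        Real.sqrt_mul (by positivity), Real.sqrt_mul (by norm_num : (0:ℝ) ≤ 2),
        Real.sqrt_sq hσ.le]
    have hexp : Real.exp (-(σ ^ 2 * k ^ 2) / 2) *
        Real.exp (k ^ 2 * σ ^ 2 / 2 - r ^ 2 / (2 * σ ^ 2)) = Real.exp (-(r ^ 2) / (2 * σ ^ 2)) := by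
      rw [← Real.exp_add]; congr 1; ring
    rw [hsqrt, hαdef, ← hexp]
    field_simp
  -- derivative of the right-hand side
  have hF2 : ∀ r : ℝ, HasDerivAt (fun y : ℝ =>
      ((Real.exp (-(σ ^ 2 * k ^ 2) / 2) *
        (cerf (((y / (Real.sqrt 2 * σ) : ℝ) : ℂ) + b)).re : ℝ) : ℂ))
      (g r + g (-r)) r := by
    intro r
    have hlin : HasDerivAt (fun w : ℂ => ((α:ℝ):ℂ) * w + b) ((α:ℝ):ℂ) ((r:ℝ):ℂ) := by
      simpa using ((hasDerivAt_id ((r:ℝ):ℂ)).const_mul (((α:ℝ):ℂ))).add_const b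
    have hc := (cerf_hasDerivAt (((α:ℝ):ℂ) * ((r:ℝ):ℂ) + b)).comp ((r:ℝ):ℂ) hlin
    have hcr := hc.comp_ofReal
    simp only [Function.comp] at hcr
    have hfun : (fun y : ℝ => cerf (((α:ℝ):ℂ) * ((y:ℝ):ℂ) + b))
        = fun y : ℝ => cerf (((y / (Real.sqrt 2 * σ) : ℝ) : ℂ) + b) := by
      funext y; congr 1; rw [hαdef]; push_cast; field_simp
    rw [hfun] at hcr
    have hre : HasDerivAt (fun y : ℝ => (cerf (((y / (Real.sqrt 2 * σ) : ℝ) : ℂ) + b)).re)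
        ((2 / (Real.sqrt π : ℂ)) * Complex.exp (-(((α:ℝ):ℂ) * ((r:ℝ):ℂ) + b) ^ 2) * ((α:ℝ):ℂ)).re r := by
      have h := (Complex.reCLM.hasFDerivAt.comp r hcr.hasFDerivAt).hasDerivAt
      simpa [Function.comp_def] using h
    have := ((hre.const_mul (Real.exp (-(σ ^ 2 * k ^ 2) / 2))).ofReal_comp)
    rw [hkey r]
    exact this
  -- derivative of the left-hand side
  have hF1 : ∀ r : ℝ, HasDerivAt (fun y : ℝ => ∫ x in (-y)..y, g x) (g r + g (-r)) r := by
    intro r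
    have hint : ∀ u v : ℝ, IntervalIntegrable g volume u v := fun u v =>
      hgcont.intervalIntegrable u v
    have heq : (fun y : ℝ => ∫ x in (-y)..y, g x)
        = fun y : ℝ => (∫ x in (0:ℝ)..y, g x) - ∫ x in (0:ℝ)..(-y), g x := by
      funext s
      rw [← intervalIntegral.integral_add_adjacent_intervals (hint (-s) 0) (hint 0 s),
        intervalIntegral.integral_symm]
      ring
    rw [heq]
    have h1 : HasDerivAt (fun u : ℝ => ∫ x in (0:ℝ)..u, g x) (g r) r :=
      intervalIntegral.integral_hasDerivAt_right (hint 0 r)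
        (hgcont.stronglyMeasurableAtFilter _ _) hgcont.continuousAt
    have h2 : HasDerivAt (fun u : ℝ => ∫ x in (0:ℝ)..u, g x) (g (-r)) (-r) :=
      intervalIntegral.integral_hasDerivAt_right (hint 0 (-r))
        (hgcont.stronglyMeasurableAtFilter _ _) hgcont.continuousAt
    have h3 := h2.scomp r (hasDerivAt_neg r)
    have h4 := h1.sub h3
    simpa [Function.comp_def, Pi.sub_def] using h4
  -- the difference is constant
  have hΦ : ∀ r : ℝ, HasDerivAt (fun y : ℝ => (∫ x in (-y)..y, g x) -
      ((Real.exp (-(σ ^ 2 * k ^ 2) / 2) *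
        (cerf (((y / (Real.sqrt 2 * σ) : ℝ) : ℂ) + b)).re : ℝ) : ℂ)) 0 r := by
    intro r
    simpa [Pi.sub_def] using (hF1 r).sub (hF2 r)
  have hconst := is_const_of_deriv_eq_zero (𝕜 := ℝ)
    (f := fun y : ℝ => (∫ x in (-y)..y, g x) -
      ((Real.exp (-(σ ^ 2 * k ^ 2) / 2) *
        (cerf (((y / (Real.sqrt 2 * σ) : ℝ) : ℂ) + b)).re : ℝ) : ℂ))
    (fun y => (hΦ y).differentiableAt) (fun y => (hΦ y).deriv) R 0
  -- value at 0
  have hzero : (cerf (((0 / (Real.sqrt 2 * σ) : ℝ) : ℂ) + b)).re = 0 := by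
    rw [show ((0 / (Real.sqrt 2 * σ) : ℝ) : ℂ) = 0 from by push_cast; ring, zero_add]
    have hJ : (∫ t in (0:ℝ)..1, Complex.exp (-(b * (t:ℂ)) ^ 2))
        = ((∫ t in (0:ℝ)..1, Real.exp (k ^ 2 * σ ^ 2 / 2 * t ^ 2) : ℝ) : ℂ) := by
      rw [← intervalIntegral.integral_ofReal]
      congr 1; funext t
      rw [Complex.ofReal_exp]
      congr 1
      rw [show -(b * (t:ℂ)) ^ 2 = (-(b ^ 2)) * (t:ℂ) ^ 2 from by ring, hb2, neg_neg]
      push_cast; ring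
    have hb' : b = ((k * σ / Real.sqrt 2 : ℝ):ℂ) * Complex.I := by
      rw [hbdef]; push_cast; ring
    rw [cerf, hJ, hb']
    rw [show (2 / ((Real.sqrt π : ℝ) : ℂ)) = (((2 / Real.sqrt π : ℝ)) : ℂ) from by push_cast; ring]
    simp [Complex.mul_re, Complex.mul_im]
  simp only [neg_zero, intervalIntegral.integral_same, hzero, mul_zero] at hconst
  rw [Complex.ofReal_zero, sub_zero] at hconst
  -- hconst : (∫ x in -R..R, g x) - ↑(...) = 0
  have := sub_eq_zero.mp hconst
  simpa using this
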